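/- Let A be an essentially small abelian symmetric monoidal category in which every object is ⊗-flat and strongly dualizable ('rigid abelian'). Let S ⊆ A be a ⊗-multiplicative class of objects (𝟙 ∈ S, S ⊗ S ⊆ S) and B₀ ⊆ A a Serre ⊗-ideal with B₀ ∩ S = ∅. Then there exists a maximal proper Serre ⊗-ideal B of A with B₀ ⊆ B and B ∩ S = ∅. -/

import Mathlib

open CategoryTheory CategoryTheory.Limits CategoryTheory.MonoidalCategory
  CategoryTheory.Pretriangulated

namespace Balmer

universe w v u v₂ u₂ v₃ u₃ v₄ u₄

variable {C : Type u} [Category.{v} C]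

/-- An object is finitely presented if its coYoneda functor preserves filtered colimits. -/
def IsFP (X : C) : Prop :=
  ∀ (J : Type v) [SmallCategory J] [IsFiltered J],
    Nonempty (PreservesColimitsOfShape J (coyoneda.obj (Opposite.op X)))

section Monoidal
variable [MonoidalCategory C]

/-- `n`-fold tensor power of an object. -/
def tpow (x : C) : ℕ → C
  | 0 => 𝟙_ C
  | n + 1 => x ⊗ tpow x n

/-- `n`-fold tensor power of a morphism. -/
def tpowHom {x y : C} (f : x ⟶ y) : ∀ n, tpow x n ⟶ tpow y n
  | 0 => 𝟙 _
  | n + 1 => f ⊗ₘ tpowHom f n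

/-- `n`-fold tensor power of a morphism out of the unit, as a morphism out of the unit. -/
def upow {z : C} (g : 𝟙_ C ⟶ z) : ∀ n, 𝟙_ C ⟶ tpow z n
  | 0 => 𝟙 _
  | n + 1 => (λ_ (𝟙_ C)).inv ≫ (g ⊗ₘ upow g n)

/-- A ⊗-multiplicative class of objects: contains the unit and is closed under `⊗`. -/
def IsTensorMultiplicative (S : Set C) : Prop :=
  𝟙_ C ∈ S ∧ ∀ ⦃a⦄, a ∈ S → ∀ ⦃b⦄, b ∈ S → (a ⊗ b) ∈ S

end Monoidal

section SerrePlain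
variable [Abelian C]

/-- A Serre subcategory (as a class of objects): contains the zeros and is closed under
subobjects, quotients and extensions. -/
def IsSerre (B : Set C) : Prop :=
  (∀ X : C, IsZero X → X ∈ B) ∧
  (∀ ⦃X Y : C⦄ (i : X ⟶ Y), Mono i → Y ∈ B → X ∈ B) ∧
  (∀ ⦃X Y : C⦄ (p : X ⟶ Y), Epi p → X ∈ B → Y ∈ B) ∧
  (∀ S : ShortComplex C, S.ShortExact → S.X₁ ∈ B → S.X₃ ∈ B → S.X₂ ∈ B)

end SerrePlain

section SerrePlain2
variable [Abelian C]

/-- A Serre subcategory closed under (small) coproducts (no tensor). -/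
def IsLocalizingSub (L : Set C) : Prop :=
  IsSerre L ∧ ∀ (J : Type v) (g : J → C) [HasCoproduct g], (∀ j, g j ∈ L) → (∐ g) ∈ L

/-- The localizing subcategory generated by a class of objects (no tensor). -/
def LocSubGen (S : Set C) : Set C :=
  {M | ∀ L : Set C, IsLocalizingSub L → S ⊆ L → M ∈ L}

end SerrePlain2

section Serre
variable [Abelian C] [MonoidalCategory C]

/-- A Serre ⊗-ideal: a Serre subcategory closed under tensoring with arbitrary objects. -/
def IsSerreTensorIdeal (B : Set C) : Prop :=
  IsSerre B ∧ ∀ (X : C) ⦃M : C⦄, M ∈ B → (X ⊗ M) ∈ B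

/-- A maximal proper Serre ⊗-ideal. -/
def IsMaxSerreTensorIdeal (B : Set C) : Prop :=
  IsSerreTensorIdeal B ∧ 𝟙_ C ∉ B ∧
    ∀ B' : Set C, IsSerreTensorIdeal B' → 𝟙_ C ∉ B' → B ⊆ B' → B' = B

/-- The Serre ⊗-ideal generated by a class of objects. -/
def SerreTensorGen (S : Set C) : Set C :=
  {M | ∀ L : Set C, IsSerreTensorIdeal L → S ⊆ L → M ∈ L}

/-- A localizing ⊗-ideal: a Serre ⊗-ideal closed under (small) coproducts. -/
def IsLocalizingTensorIdeal (L : Set C) : Prop :=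
  IsSerreTensorIdeal L ∧
    ∀ (J : Type v) (g : J → C) [HasCoproduct g], (∀ j, g j ∈ L) → (∐ g) ∈ L

/-- The localizing ⊗-ideal generated by a class of objects. -/
def LocTensorGen (S : Set C) : Set C :=
  {M | ∀ L : Set C, IsLocalizingTensorIdeal L → S ⊆ L → M ∈ L}

/-- A Serre ⊗-ideal of the full (abelian, monoidal) subcategory of objects in `P`
(e.g. `P` = finitely presented objects). -/
def IsSerreTensorIdealIn (P B : Set C) : Prop :=
  B ⊆ P ∧
  (∀ X : C, IsZero X → X ∈ P → X ∈ B) ∧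
  (∀ ⦃X Y : C⦄ (i : X ⟶ Y), Mono i → X ∈ P → Y ∈ B → X ∈ B) ∧
  (∀ ⦃X Y : C⦄ (p : X ⟶ Y), Epi p → Y ∈ P → X ∈ B → Y ∈ B) ∧
  (∀ S : ShortComplex C, S.ShortExact → S.X₂ ∈ P → S.X₁ ∈ B → S.X₃ ∈ B → S.X₂ ∈ B) ∧
  (∀ ⦃X : C⦄, X ∈ P → ∀ ⦃M : C⦄, M ∈ B → (X ⊗ M) ∈ B)

/-- A maximal proper Serre ⊗-ideal of the full subcategory of objects in `P`. -/
def IsMaxSerreTensorIdealIn (P B : Set C) : Prop :=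
  IsSerreTensorIdealIn P B ∧ 𝟙_ C ∉ B ∧
    ∀ B' : Set C, IsSerreTensorIdealIn P B' → 𝟙_ C ∉ B' → B ⊆ B' → B' = B

end Serre

section Tri
variable [Preadditive C] [HasZeroObject C] [HasShift C ℤ]
  [∀ n : ℤ, (shiftFunctor C n).Additive] [Pretriangulated C] [MonoidalCategory C]

/-- A thick ⊗-ideal of a tensor-triangulated category. -/
def IsThickTensorIdeal (P : Set C) : Prop :=
  (∀ ⦃x y : C⦄, (x ≅ y) → x ∈ P → y ∈ P) ∧
  (∀ (x : C) (n : ℤ), x ∈ P → (shiftFunctor C n).obj x ∈ P) ∧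
  (∀ T : Triangle C, T ∈ (distTriang C) → T.obj₁ ∈ P → T.obj₂ ∈ P → T.obj₃ ∈ P) ∧
  (∀ x y : C, (∃ (i : x ⟶ y) (r : y ⟶ x), i ≫ r = 𝟙 x) → y ∈ P → x ∈ P) ∧
  (∀ (x : C) ⦃y : C⦄, y ∈ P → (x ⊗ y) ∈ P)

/-- A prime thick ⊗-ideal. -/
def IsPrimeThickTensorIdeal (P : Set C) : Prop :=
  IsThickTensorIdeal P ∧ (∃ x : C, x ∉ P) ∧
    ∀ x y : C, (x ⊗ y) ∈ P → x ∈ P ∨ y ∈ P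

end Tri

/-!
Zorn's lemma gives a Serre ⊗-ideal `B ⊇ B₀` maximal among those avoiding `S`. Maximality
forces `B` to be saturated: if `x ⊗ M ∈ B` for some `x ∈ S`, then `M ∈ B`, because the objects
with this property again form a Serre ⊗-ideal avoiding `S` (flatness makes `x ⊗ -` exact and `S`
is closed under `⊗`). By rigidity `x ◁ η_x` is a monomorphism, so `x` kills `ker η_x`, and hence
`ker η_x ∈ B` for every `x ∈ S`. A Serre ⊗-ideal `C ⊋ B` contains some `x ∈ S` by maximality,
hence the target `x ⊗ xᘁ` and the kernel of `η_x : 𝟙 ⟶ x ⊗ xᘁ`, and therefore `𝟙`.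
-/

section Monoidal

variable {A : Type u} [Category.{v} A] [MonoidalCategory A]

def tensorSaturation (S B : Set A) : Set A :=
  {M | ∃ x ∈ S, x ⊗ M ∈ B}

lemma tensorSaturation_inter_eq_empty {S B : Set A} (hS : IsTensorMultiplicative S)
    (hBS : B ∩ S = ∅) : tensorSaturation S B ∩ S = ∅ := by
  rw [Set.eq_empty_iff_forall_notMem] at hBS ⊢
  rintro M ⟨⟨x, hx, hxM⟩, hM⟩
  exact hBS _ ⟨hxM, hS.2 hx hM⟩

-- The zig-zag identity exhibits `η ▷ x` as a split monomorphism.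
instance mono_coevaluation_whiskerRight (x : A) [HasRightDual x] : Mono (η_ x xᘁ ▷ x) := by
  have hzigzag : η_ x xᘁ ▷ x ≫ (α_ x xᘁ x).hom ≫ x ◁ ε_ x xᘁ = (λ_ x).hom ≫ (ρ_ x).inv := by
    simpa only [Category.assoc] using ExactPairing.evaluation_coevaluation (X := x) (Y := xᘁ)
  have : Mono (η_ x xᘁ ▷ x ≫ (α_ x xᘁ x).hom ≫ x ◁ ε_ x xᘁ) := by
    rw [hzigzag]
    infer_instance
  exact mono_of_mono _ ((α_ x xᘁ x).hom ≫ x ◁ ε_ x xᘁ)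

instance mono_whiskerLeft_coevaluation [BraidedCategory A] (x : A) [HasRightDual x] :
    Mono (x ◁ η_ x xᘁ) := by
  have : Mono (x ◁ η_ x xᘁ ≫ (β_ x (x ⊗ xᘁ)).hom) := by
    rw [BraidedCategory.braiding_naturality_right]
    infer_instance
  exact mono_of_mono _ (β_ x (x ⊗ xᘁ)).hom

end Monoidal

section Abelian

variable {A : Type u} [Category.{v} A] [Abelian A]

lemma IsSerre.mem_of_iso {B : Set A} (hB : IsSerre B) {X Y : A} (e : X ≅ Y) (hY : Y ∈ B) :
    X ∈ B :=
  hB.2.1 e.hom inferInstance hY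

lemma IsSerre.mem_of_kernel_mem {B : Set A} (hB : IsSerre B) {X Y : A} (f : X ⟶ Y)
    (hK : kernel f ∈ B) (hY : Y ∈ B) : X ∈ B := by
  have hses : (ShortComplex.mk (kernel.ι f) (Abelian.coimage.π f)
      (cokernel.condition (kernel.ι f))).ShortExact :=
    ⟨ShortComplex.exact_of_g_is_cokernel _ (cokernelIsCokernel (kernel.ι f))⟩
  have hcoim : Abelian.coimage f ∈ B := hB.2.1 (Abelian.factorThruCoimage f) inferInstance hY
  exact hB.2.2.2 _ hses hK hcoim

variable [MonoidalCategory A]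

lemma isSerreTensorIdeal_sUnion {c : Set (Set A)} (hc : ∀ B ∈ c, IsSerreTensorIdeal B)
    (hchain : IsChain (· ⊆ ·) c) (hne : c.Nonempty) : IsSerreTensorIdeal (⋃₀ c) := by
  obtain ⟨B₀, hB₀⟩ := hne
  refine ⟨⟨?_, ?_, ?_, ?_⟩, ?_⟩
  · exact fun X hX => ⟨B₀, hB₀, (hc B₀ hB₀).1.1 X hX⟩
  · rintro X Y i hi ⟨B, hB, hY⟩
    exact ⟨B, hB, (hc B hB).1.2.1 i hi hY⟩
  · rintro X Y p hp ⟨B, hB, hX⟩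
    exact ⟨B, hB, (hc B hB).1.2.2.1 p hp hX⟩
  · rintro T hT ⟨B, hB, h₁⟩ ⟨B', hB', h₃⟩
    rcases hchain.total hB hB' with hBB' | hB'B
    · exact ⟨B', hB', (hc B' hB').1.2.2.2 T hT (hBB' h₁) h₃⟩
    · exact ⟨B, hB, (hc B hB).1.2.2.2 T hT h₁ (hB'B h₃)⟩
  · rintro X M ⟨B, hB, hM⟩
    exact ⟨B, hB, (hc B hB).2 X hM⟩

lemma exists_maximal_isSerreTensorIdeal_inter_eq_empty {S B₀ : Set A}
    (hB₀ : IsSerreTensorIdeal B₀) (hdisj : B₀ ∩ S = ∅) :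
    ∃ B, B₀ ⊆ B ∧ Maximal (fun B => IsSerreTensorIdeal B ∧ B ∩ S = ∅) B := by
  refine zorn_subset_nonempty _ (fun c hc hchain hne => ?_) B₀ ⟨hB₀, hdisj⟩
  refine ⟨⋃₀ c, ⟨isSerreTensorIdeal_sUnion (fun B hB => (hc hB).1) hchain hne, ?_⟩,
    fun _ => Set.subset_sUnion_of_mem⟩
  simp only [← Set.disjoint_iff_inter_eq_empty, Set.disjoint_sUnion_left] at hc ⊢
  exact fun B hB => (hc hB).2

lemma subset_tensorSaturation {S B : Set A} (hS : 𝟙_ A ∈ S) (hB : IsSerreTensorIdeal B) :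
    B ⊆ tensorSaturation S B :=
  fun _ hM => ⟨𝟙_ A, hS, hB.2 _ hM⟩

lemma unit_mem_of_mem_of_kernel_coevaluation_mem [BraidedCategory A] {C : Set A}
    (hC : IsSerreTensorIdeal C) {x : A} [HasRightDual x] (hx : x ∈ C)
    (hK : kernel (η_ x xᘁ) ∈ C) : 𝟙_ A ∈ C :=
  hC.1.mem_of_kernel_mem (η_ x xᘁ) hK (hC.1.mem_of_iso (β_ x xᘁ) (hC.2 xᘁ hx))

variable [∀ X : A, PreservesFiniteColimits (tensorLeft X)]
  [∀ X : A, PreservesFiniteLimits (tensorLeft X)]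

lemma isZero_tensor_kernel_of_mono_whiskerLeft (x : A) {X Y : A} (f : X ⟶ Y) [Mono (x ◁ f)] :
    IsZero (x ⊗ kernel f) := by
  have : Mono (x ◁ kernel.ι f) := (tensorLeft x).map_mono _
  have hι : x ◁ kernel.ι f = 0 := by
    rw [← cancel_mono (x ◁ f), ← whiskerLeft_comp, kernel.condition, zero_comp]
    exact (tensorLeft x).map_zero _ _
  rw [IsZero.iff_id_eq_zero, ← cancel_mono (x ◁ kernel.ι f), hι, comp_zero, zero_comp]

variable [BraidedCategory A]

lemma isSerreTensorIdeal_tensorSaturation {S B : Set A} (hS : IsTensorMultiplicative S)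
    (hB : IsSerreTensorIdeal B) : IsSerreTensorIdeal (tensorSaturation S B) := by
  obtain ⟨hSerre, hIdeal⟩ := hB
  refine ⟨⟨?_, ?_, ?_, ?_⟩, ?_⟩
  · exact fun X hX => subset_tensorSaturation hS.1 ⟨hSerre, hIdeal⟩ (hSerre.1 X hX)
  · rintro X Y i hi ⟨x, hx, hxY⟩
    exact ⟨x, hx, hSerre.2.1 (x ◁ i) ((tensorLeft x).map_mono i) hxY⟩
  · rintro X Y p hp ⟨x, hx, hxX⟩
    exact ⟨x, hx, hSerre.2.2.1 (x ◁ p) ((tensorLeft x).map_epi p) hxX⟩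
  · rintro T hT ⟨x, hx, hx₁⟩ ⟨y, hy, hy₃⟩
    refine ⟨x ⊗ y, hS.2 hx hy, hSerre.2.2.2 _ (hT.map_of_exact (tensorLeft (x ⊗ y))) ?_ ?_⟩
    · exact hSerre.mem_of_iso (whiskerRightIso (β_ x y) T.X₁ ≪≫ α_ y x T.X₁) (hIdeal y hx₁)
    · exact hSerre.mem_of_iso (α_ x y T.X₃) (hIdeal x hy₃)
  · rintro X M ⟨x, hx, hxM⟩
    refine ⟨x, hx, hSerre.mem_of_iso ?_ (hIdeal X hxM)⟩
    exact (α_ x X M).symm ≪≫ whiskerRightIso (β_ x X) M ≪≫ α_ X x M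

lemma isMaxSerreTensorIdeal_of_maximal [RightRigidCategory A] {S B : Set A}
    (hS : IsTensorMultiplicative S)
    (hB : Maximal (fun B => IsSerreTensorIdeal B ∧ B ∩ S = ∅) B) : IsMaxSerreTensorIdeal B := by
  obtain ⟨hBideal, hBS⟩ := hB.prop
  have hsat : B = tensorSaturation S B :=
    hB.eq_of_subset ⟨isSerreTensorIdeal_tensorSaturation hS hBideal,
      tensorSaturation_inter_eq_empty hS hBS⟩ (subset_tensorSaturation hS.1 hBideal)
  have hker : ∀ x ∈ S, kernel (η_ x xᘁ) ∈ B := fun x hx => by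
    rw [hsat]
    exact ⟨x, hx, hBideal.1.1 _ (isZero_tensor_kernel_of_mono_whiskerLeft x _)⟩
  have hunit : 𝟙_ A ∉ B := fun h => Set.eq_empty_iff_forall_notMem.1 hBS _ ⟨h, hS.1⟩
  refine ⟨hBideal, hunit, fun B' hB' hB'unit hBB' => ?_⟩
  have hB'S : B' ∩ S = ∅ := Set.eq_empty_iff_forall_notMem.2 fun x ⟨hxB', hxS⟩ =>
    hB'unit (unit_mem_of_mem_of_kernel_coevaluation_mem hB' hxB' (hBB' (hker x hxS)))
  exact hB.eq_of_superset ⟨hB', hB'S⟩ hBB'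

end Abelian

/-- (Abelian analogue of Balmer's Lemma 3.8.) In an essentially small rigid
abelian symmetric monoidal category in which every object is ⊗-flat, given a ⊗-multiplicative
class `S` and a Serre ⊗-ideal `B₀` disjoint from `S`, there exists a *maximal proper* Serre
⊗-ideal `B` with `B₀ ⊆ B` and `B ∩ S = ∅`. -/
theorem stmt8 {A : Type u} [Category.{v} A] [Abelian A] [MonoidalCategory A]
    [SymmetricCategory A] [MonoidalPreadditive A] [RigidCategory A] [EssentiallySmall.{w} A]
    [∀ X : A, PreservesFiniteColimits (tensorLeft X)]
    [∀ X : A, PreservesFiniteLimits (tensorLeft X)]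
    (S : Set A) (hS : IsTensorMultiplicative S)
    (B₀ : Set A) (hB₀ : IsSerreTensorIdeal B₀) (hdisj : B₀ ∩ S = ∅) :
    ∃ B : Set A, IsMaxSerreTensorIdeal B ∧ B₀ ⊆ B ∧ B ∩ S = ∅ := by
  obtain ⟨B, hB₀B, hB⟩ := exists_maximal_isSerreTensorIdeal_inter_eq_empty hB₀ hdisj
  exact ⟨B, isMaxSerreTensorIdeal_of_maximal hS hB, hB₀B, hB.prop.2⟩

end Balmer
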